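/- Let (X1,X2,X3,X4) be a random vector on finite sets with positive marginals whose entropy function is a·r1 + b·r2 with a,b ≥ 0, where r1 is the rank function of U_{2,4} and r2 is the rank function of U^{12}_{1,2} (r2(A) = min{1, |A ∩ {1,2}|}). Then X3 and X4 are uniformly distributed on alphabets of common size v, and a = log v for some positive integer v. -/

import Mathlib

open Finset
open scoped BigOperators
noncomputable section

/-- Probability that the `A`-marginal of the random vector with joint pmf `p`
takes the same value as on `x`. -/
def margProb {n : ℕ} {m : Fin n → ℕ} (p : (∀ i, Fin (m i)) → ℝ)
    (A : Finset (Fin n)) (x : ∀ i, Fin (m i)) : ℝ :=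
  ∑ y : ∀ i, Fin (m i), if ∀ i ∈ A, y i = x i then p y else 0

/-- The Shannon entropy `H(X_A)` of the subvector indexed by `A`, for the random
vector with joint pmf `p`. -/
def jointEntropy {n : ℕ} {m : Fin n → ℕ} (p : (∀ i, Fin (m i)) → ℝ)
    (A : Finset (Fin n)) : ℝ :=
  -∑ x : ∀ i, Fin (m i), p x * Real.log (margProb p A x)

/-- `p` is a probability mass function. -/
def IsPMF {α : Type*} [Fintype α] (p : α → ℝ) : Prop :=
  (∀ x, 0 ≤ p x) ∧ ∑ x, p x = 1

/-- `h` is an entropy function of degree `n`: it arises as `A ↦ H(X_A)` for a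
random vector `(X_1, …, X_n)` on finite sets. -/
def IsEntropyFunc (n : ℕ) (h : Finset (Fin n) → ℝ) : Prop :=
  ∃ (m : Fin n → ℕ) (p : (∀ i, Fin (m i)) → ℝ), IsPMF p ∧ ∀ A, jointEntropy p A = h A

/-- Marginal probability of the single coordinate `i` taking value `x`. -/
def marg1 {n : ℕ} {m : Fin n → ℕ} (p : (∀ i, Fin (m i)) → ℝ)
    (i : Fin n) (x : Fin (m i)) : ℝ :=
  ∑ y : ∀ j, Fin (m j), if y i = x then p y else 0

/-- Marginal probability of the pair of coordinates `(i, j)` taking values `(x, y)`. -/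
def marg2 {n : ℕ} {m : Fin n → ℕ} (p : (∀ i, Fin (m i)) → ℝ)
    (i j : Fin n) (x : Fin (m i)) (y : Fin (m j)) : ℝ :=
  ∑ z : ∀ k, Fin (m k), if z i = x ∧ z j = y then p z else 0

/-- Rank function of the uniform matroid `U_{2,4}`. -/
def r24 (A : Finset (Fin 4)) : ℝ := min 2 (A.card : ℝ)

/-- Rank function of `U^{12}_{1,2}`: a `U_{1,2}` on `{1,2}` (indices `0,1`) with
elements `3,4` (indices `2,3`) loops. -/
def rU12_12 (A : Finset (Fin 4)) : ℝ := min 1 ((A ∩ ({0, 1} : Finset (Fin 4))).card : ℝ)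

/-!
Write `X₂, X₃, X₄` for the coordinates with indices `1, 2, 3`. The prescribed entropies give
equality in subadditivity for the pairs `X₂X₃`, `X₂X₄`, `X₃X₄`, which are therefore independent,
and `H(X₂X₃X₄) = H(X₂X₃) = H(X₂X₄)`, so `X₄` is a function of `(X₂, X₃)` and `X₃` one of
`(X₂, X₄)`. At an outcome `w` of positive probability this gives
`P₂P₃ = P₂₃ = P₂₃₄ = P₂₄ = P₂P₄`, hence `P₃(w₃) = P₄(w₄)`. Since `X₃, X₄` are independent with
positive marginals, every pair of values occurs at such an outcome, so both laws are uniform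
with one common value `1/v`, and `a = H(X₃) = log v`.
-/

open Real InformationTheory

namespace FinEntropy

section

variable {Ω β γ : Type*} [Fintype Ω] [DecidableEq β] [DecidableEq γ]

def law (p : Ω → ℝ) (X : Ω → β) (b : β) : ℝ :=
  ∑ ω, if X ω = b then p ω else 0

def entropy (p : Ω → ℝ) (X : Ω → β) : ℝ :=
  -∑ ω, p ω * log (law p X (X ω))

variable {p : Ω → ℝ} {X : Ω → β} {Y : Ω → γ}

lemma law_nonneg (hp : 0 ≤ p) (X : Ω → β) (b : β) : 0 ≤ law p X b :=
  sum_nonneg fun ω _ => by split_ifs; exacts [hp ω, le_rfl]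

lemma apply_le_law (hp : 0 ≤ p) (X : Ω → β) (ω : Ω) : p ω ≤ law p X (X ω) := by
  simpa [law] using single_le_sum (f := fun ω' => if X ω' = X ω then p ω' else 0)
    (fun ω' _ => by split_ifs; exacts [hp ω', le_rfl]) (mem_univ ω)

lemma law_mono (hp : 0 ≤ p) {b : β} {c : γ} (h : ∀ ω, Y ω = c → X ω = b) :
    law p Y c ≤ law p X b :=
  sum_le_sum fun ω _ => by
    by_cases hY : Y ω = c
    · simp [hY, h ω hY]
    · rw [if_neg hY]; split_ifs; exacts [hp ω, le_rfl]

lemma exists_pos_of_law_pos {b : β} (h : 0 < law p X b) : ∃ ω, X ω = b ∧ 0 < p ω := by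
  by_contra! hneg
  refine h.not_ge (sum_nonpos fun ω _ => ?_)
  split_ifs with hω
  exacts [hneg ω hω, le_rfl]

lemma sum_mul_comp_eq_sum_law [Fintype β] (f : β → ℝ) :
    ∑ ω, p ω * f (X ω) = ∑ b, law p X b * f b := by
  simp only [law, sum_mul, ite_mul, zero_mul]
  rw [sum_comm]
  simp

lemma sum_law [Fintype β] (hp : IsPMF p) (X : Ω → β) : ∑ b, law p X b = 1 := by
  simpa [hp.2] using (sum_mul_comp_eq_sum_law (p := p) (X := X) fun _ => 1).symm

/-- Equality case of Gibbs' inequality. -/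
lemma eq_of_sum_mul_log_div_nonpos {ι : Type*} [Fintype ι] {q r : ι → ℝ} (hq : 0 ≤ q)
    (hr : 0 ≤ r) (hsum : ∑ i, q i = ∑ i, r i) (hqr : ∀ i, r i = 0 → q i = 0)
    (hkl : ∑ i, q i * log (q i / r i) ≤ 0) : q = r := by
  have hterm_nonneg : ∀ i, 0 ≤ r i * klFun (q i / r i) := fun i =>
    mul_nonneg (hr i) (klFun_nonneg (div_nonneg (hq i) (hr i)))
  have hterm : ∀ i, r i * klFun (q i / r i) = q i * log (q i / r i) + r i - q i := by
    intro i
    by_cases h : r i = 0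
    · simp [h, hqr i h]
    · rw [klFun_apply]
      field_simp
  have hzero : ∑ i, r i * klFun (q i / r i) = 0 := by
    refine le_antisymm ?_ (sum_nonneg fun i _ => hterm_nonneg i)
    simp only [hterm, sum_sub_distrib, sum_add_distrib]
    linarith
  funext i
  rcases mul_eq_zero.mp ((sum_eq_zero_iff_of_nonneg fun i _ => hterm_nonneg i).mp hzero i
    (mem_univ i)) with h | h
  · rw [h, hqr i h]
  · have hri : r i ≠ 0 := fun h0 => by simp [h0, klFun_zero] at h
    exact (div_eq_one_iff_eq hri).mp ((klFun_eq_zero_iff (div_nonneg (hq i) (hr i))).mp h)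

theorem law_pair_eq_mul_of_entropy_pair_eq_add [Fintype β] [Fintype γ] (hp : IsPMF p)
    (h : entropy p (fun ω => (X ω, Y ω)) = entropy p X + entropy p Y) (b : β) (c : γ) :
    law p (fun ω => (X ω, Y ω)) (b, c) = law p X b * law p Y c := by
  set q := law p (fun ω => (X ω, Y ω))
  have hq_le_left (bc : β × γ) : q bc ≤ law p X bc.1 :=
    law_mono hp.1 fun ω h => congrArg Prod.fst h
  have hq_le_right (bc : β × γ) : q bc ≤ law p Y bc.2 :=
    law_mono hp.1 fun ω h => congrArg Prod.snd h
  have hlog (bc : β × γ) : q bc * log (q bc / (law p X bc.1 * law p Y bc.2))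
      = q bc * (log (q bc) - log (law p X bc.1) - log (law p Y bc.2)) := by
    by_cases h0 : q bc = 0
    · simp [h0]
    · have hpos : 0 < q bc := (law_nonneg hp.1 _ bc).lt_of_ne' h0
      have hX := hpos.trans_le (hq_le_left bc)
      have hY := hpos.trans_le (hq_le_right bc)
      rw [log_div hpos.ne' (by positivity), log_mul hX.ne' hY.ne', sub_sub]
  suffices q = fun bc => law p X bc.1 * law p Y bc.2 from congrFun this (b, c)
  refine eq_of_sum_mul_log_div_nonpos (law_nonneg hp.1 _)
    (fun bc => mul_nonneg (law_nonneg hp.1 _ _) (law_nonneg hp.1 _ _)) ?_ ?_ ?_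
  · rw [sum_law hp, Fintype.sum_prod_type, ← sum_mul_sum, sum_law hp, sum_law hp, one_mul]
  · intro bc h0
    rcases mul_eq_zero.mp h0 with h0 | h0
    exacts [le_antisymm ((hq_le_left bc).trans_eq h0) (law_nonneg hp.1 _ _),
      le_antisymm ((hq_le_right bc).trans_eq h0) (law_nonneg hp.1 _ _)]
  · calc ∑ bc, q bc * log (q bc / (law p X bc.1 * law p Y bc.2))
        = ∑ bc, q bc * (log (q bc) - log (law p X bc.1) - log (law p Y bc.2)) :=
          sum_congr rfl fun bc _ => hlog bc
      _ = ∑ ω, p ω * (log (q (X ω, Y ω)) - log (law p X (X ω)) - log (law p Y (Y ω))) :=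
          (sum_mul_comp_eq_sum_law (X := fun ω => (X ω, Y ω)) fun bc =>
            log (q bc) - log (law p X bc.1) - log (law p Y bc.2)).symm
      _ = entropy p X + entropy p Y - entropy p (fun ω => (X ω, Y ω)) := by
          simp only [entropy, mul_sub, sum_sub_distrib]
          ring
      _ ≤ 0 := by rw [h, sub_self]

theorem law_eq_of_entropy_le (hp : 0 ≤ p) (hXY : ∀ ω ω', Y ω' = Y ω → X ω' = X ω)
    (h : entropy p Y ≤ entropy p X) (ω : Ω) (hω : 0 < p ω) :
    law p Y (Y ω) = law p X (X ω) := by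
  have hle (ω : Ω) : law p Y (Y ω) ≤ law p X (X ω) := law_mono hp (hXY ω)
  have hterm (ω : Ω) : 0 ≤ p ω * (log (law p X (X ω)) - log (law p Y (Y ω))) := by
    rcases (hp ω).eq_or_lt with h0 | hpos
    · simp [← h0]
    · exact mul_nonneg hpos.le
        (sub_nonneg.mpr (log_le_log (hpos.trans_le (apply_le_law hp Y ω)) (hle ω)))
  have hsum : ∑ ω, p ω * (log (law p X (X ω)) - log (law p Y (Y ω))) = 0 := by
    refine le_antisymm ?_ (sum_nonneg fun ω _ => hterm ω)
    simp only [entropy] at h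
    simp only [mul_sub, sum_sub_distrib]
    linarith
  have hY := hω.trans_le (apply_le_law hp Y ω)
  have hlog := (mul_eq_zero.mp ((sum_eq_zero_iff_of_nonneg fun ω _ => hterm ω).mp hsum ω
    (mem_univ ω))).resolve_left hω.ne'
  exact log_injOn_pos hY (hY.trans_le (hle ω)) (by linarith)

end

section

variable {n : ℕ} {m : Fin n → ℕ} {β : Type*} [DecidableEq β]

lemma jointEntropy_eq_entropy (p : (∀ i, Fin (m i)) → ℝ) {A : Finset (Fin n)}
    {X : (∀ i, Fin (m i)) → β} (hX : ∀ x y, (∀ i ∈ A, y i = x i) ↔ X y = X x) :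
    jointEntropy p A = entropy p X := by
  simp only [jointEntropy, entropy, margProb, law, hX]

lemma jointEntropy_singleton (p : (∀ i, Fin (m i)) → ℝ) (i : Fin n) :
    jointEntropy p {i} = entropy p (· i) :=
  jointEntropy_eq_entropy p fun x y => by simp

lemma jointEntropy_pair (p : (∀ i, Fin (m i)) → ℝ) (i j : Fin n) :
    jointEntropy p {i, j} = entropy p (fun x => (x i, x j)) :=
  jointEntropy_eq_entropy p fun x y => by simp

lemma jointEntropy_triple (p : (∀ i, Fin (m i)) → ℝ) (i j k : Fin n) :
    jointEntropy p {i, j, k} = entropy p (fun x => (x i, x j, x k)) :=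
  jointEntropy_eq_entropy p fun x y => by simp

end

end FinEntropy

lemma card_mul_eq_one_of_forall_eq {α : Type*} [Fintype α] {f : α → ℝ} {c : ℝ}
    (hf : ∑ x, f x = 1) (hc : ∀ x, f x = c) : (Fintype.card α : ℝ) * c = 1 := by
  simpa [hc] using hf

lemma uniform_of_forall_eq {α β : Type*} [Fintype α] [Fintype β] {f : α → ℝ} {g : β → ℝ}
    (hf : ∑ x, f x = 1) (hg : ∑ y, g y = 1) (hfg : ∀ x y, f x = g y) :
    (∀ x, f x = (Fintype.card α : ℝ)⁻¹) ∧ (∀ y, g y = (Fintype.card β : ℝ)⁻¹) ∧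
      Fintype.card α = Fintype.card β ∧ 0 < Fintype.card α := by
  have ⟨x₀⟩ : Nonempty α := by by_contra! h; simp at hf
  have ⟨y₀⟩ : Nonempty β := by by_contra! h; simp at hg
  have hα := card_mul_eq_one_of_forall_eq hf fun x => hfg x y₀
  have hβ := card_mul_eq_one_of_forall_eq hg fun y => ((hfg x₀ y).symm.trans (hfg x₀ y₀))
  refine ⟨fun x => (hfg x y₀).trans (eq_inv_of_mul_eq_one_right hα),
    fun y => ((hfg x₀ y).symm.trans (hfg x₀ y₀)).trans (eq_inv_of_mul_eq_one_right hβ), ?_,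
    Fintype.card_pos_iff.mpr ⟨x₀⟩⟩
  exact_mod_cast mul_right_cancel₀ (right_ne_zero_of_mul_eq_one hα) (hα.trans hβ.symm)

open FinEntropy

theorem statement16_general {m : Fin 4 → ℕ} (p : (∀ i, Fin (m i)) → ℝ)
    (hpmf : IsPMF p)
    (hpos : ∀ (i : Fin 4) (x : Fin (m i)), 0 < marg1 p i x)
    (a b : ℝ)
    (hEnt : ∀ A : Finset (Fin 4), jointEntropy p A = a * r24 A + b * rU12_12 A) :
    (∀ x : Fin (m 2), marg1 p 2 x = (m 2 : ℝ)⁻¹) ∧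
    (∀ x : Fin (m 3), marg1 p 3 x = (m 3 : ℝ)⁻¹) ∧
    m 2 = m 3 ∧ 0 < m 2 ∧ a = Real.log (m 2) := by
  have indep (i j : Fin 4)
      (hij : jointEntropy p {i, j} = jointEntropy p {i} + jointEntropy p {j}) :=
    law_pair_eq_mul_of_entropy_pair_eq_add hpmf (X := fun x : ∀ i, Fin (m i) => x i)
      (Y := fun x => x j)
      (by rwa [← jointEntropy_pair, ← jointEntropy_singleton, ← jointEntropy_singleton])
  have det (j : Fin 4) (hj : j = 2 ∨ j = 3)
      (h : jointEntropy p {1, 2, 3} = jointEntropy p {1, j}) :=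
    law_eq_of_entropy_le hpmf.1 (X := fun x : ∀ i, Fin (m i) => (x 1, x j))
      (Y := fun x => (x 1, x 2, x 3))
      (fun ω ω' hω => by rcases hj with rfl | rfl <;> simp_all)
      (by rw [← jointEntropy_triple, ← jointEntropy_pair, h])
  have indep23 := indep 2 3 (by simp [hEnt, r24, rU12_12]; ring)
  have indep12 := indep 1 2 (by simp [hEnt, r24, rU12_12]; ring)
  have indep13 := indep 1 3 (by simp [hEnt, r24, rU12_12]; ring)
  have det2 := det 2 (by simp) (by simp [hEnt, r24, rU12_12]; norm_num)
  have det3 := det 3 (by simp) (by simp [hEnt, r24, rU12_12]; norm_num)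
  have key (y : Fin (m 2)) (z : Fin (m 3)) : marg1 p 2 y = marg1 p 3 z := by
    obtain ⟨w, hw, hpw⟩ := exists_pos_of_law_pos
      (X := fun x : ∀ i, Fin (m i) => (x 2, x 3)) (b := (y, z))
      (by rw [indep23]; exact mul_pos (hpos 2 y) (hpos 3 z))
    obtain ⟨rfl, rfl⟩ := Prod.mk.inj hw
    refine mul_left_cancel₀ (hpos 1 (w 1)).ne' ?_
    change law p (· 1) (w 1) * law p (· 2) (w 2) = law p (· 1) (w 1) * law p (· 3) (w 3)
    rw [← indep12, ← indep13, ← det2 w hpw, det3 w hpw]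
  obtain ⟨h2, h3, hcard, hpos2⟩ := uniform_of_forall_eq (sum_law hpmf _) (sum_law hpmf _) key
  simp only [Fintype.card_fin] at h2 h3 hcard hpos2
  refine ⟨h2, h3, hcard, hpos2, ?_⟩
  calc a = entropy p (· 2) := by rw [← jointEntropy_singleton, hEnt]; simp [r24, rU12_12]
    _ = log (m 2) := by simp [entropy, h2, ← sum_mul, hpmf.2]

/-- If the entropy function of `(X1,X2,X3,X4)` equals `a·r(U_{2,4}) + b·r(U^{12}_{1,2})`
with `a, b ≥ 0`, then `X3` and `X4` are uniform on alphabets of a common size `v ≥ 1`,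
and `a = log v`. -/
theorem statement16 {m : Fin 4 → ℕ} (p : (∀ i, Fin (m i)) → ℝ)
    (hpmf : IsPMF p)
    (hpos : ∀ (i : Fin 4) (x : Fin (m i)), 0 < marg1 p i x)
    (a b : ℝ) (ha : 0 ≤ a) (hb : 0 ≤ b)
    (hEnt : ∀ A : Finset (Fin 4), jointEntropy p A = a * r24 A + b * rU12_12 A) :
    (∀ x : Fin (m 2), marg1 p 2 x = (m 2 : ℝ)⁻¹) ∧
    (∀ x : Fin (m 3), marg1 p 3 x = (m 3 : ℝ)⁻¹) ∧
    m 2 = m 3 ∧ 0 < m 2 ∧ a = Real.log (m 2) :=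
  statement16_general p hpmf hpos a b hEnt
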